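/- arXiv:math/0404552 — 2 statements merged into one kernel-verified Lean document; each statement's English description precedes it below -/
import Mathlib

section
/- For every nontrivial g in F', the conjugacy class of g in F' is infinite; in particular, F' is an i.c.c. group (every nontrivial conjugacy class is infinite). -/
open Set

noncomputable section

/-- `d` is an `N`-adic rational: of the form `a / N ^ k`. -/
def NAdic (N : ℕ) (d : ℝ) : Prop := ∃ a k : ℕ, d = (a : ℝ) / (N : ℝ) ^ k

/-- Membership in the generalized Thompson group `F(N)`, modeled as permutations of `ℝ`
that are the identity outside `[0,1]`: continuous, strictly increasing, fixing `0` and `1`,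
differentiable except at finitely many `N`-adic points of `[0,1]`, with derivatives
integer powers of `N`. -/
def InFN (N : ℕ) (f : Equiv.Perm ℝ) : Prop :=
  Continuous f ∧ StrictMono f ∧
  (∀ x : ℝ, x ∉ Icc (0:ℝ) 1 → f x = x) ∧
  f 0 = 0 ∧ f 1 = 1 ∧
  ∃ s : Finset ℝ, (∀ x ∈ s, x ∈ Icc (0:ℝ) 1 ∧ NAdic N x) ∧
    ∀ x ∈ Icc (0:ℝ) 1, x ∉ s → ∃ m : ℤ, HasDerivAt (⇑f) ((N : ℝ) ^ m) x

/-- Membership in `F' ⊆ F(N)`: elements that are the identity near both `0` and `1`. -/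
def InF' (N : ℕ) (f : Equiv.Perm ℝ) : Prop :=
  InFN N f ∧ ∃ ε δ : ℝ, 0 < ε ∧ ε < 1 ∧ 0 < δ ∧ δ < 1 ∧
    (∀ x ∈ Icc (0:ℝ) ε, f x = x) ∧ (∀ x ∈ Icc δ (1:ℝ), f x = x)

/-- Membership in `D ⊆ F(N)`: elements that are the identity near `1`. -/
def InD (N : ℕ) (f : Equiv.Perm ℝ) : Prop :=
  InFN N f ∧ ∃ δ : ℝ, 0 < δ ∧ δ < 1 ∧ ∀ x ∈ Icc δ (1:ℝ), f x = x

/-- The piecewise linear map `A_{d,p}`. -/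
def A (N : ℕ) (d : ℝ) (p : ℤ) (x : ℝ) : ℝ :=
  if x ≤ d then x / (N : ℝ) ^ p
  else if x ≤ 1 - d / (N : ℝ) ^ p then x - d + d / (N : ℝ) ^ p
  else (N : ℝ) ^ p * x + 1 - (N : ℝ) ^ p

/-!
If `g ≠ 1` moves some `a ∈ (0, 1)` upwards (otherwise pass to `g⁻¹`), take an `N`-adic interval
`[c, c + ε]` containing `u = g a` with `a < c`. For each `n` the element of `F'` that is the identity
left of `c`, has slope `N⁻ⁿ` on `[c, c + ε]` and slope `Nⁿ` on `[c + ε, c + ε + ε / Nⁿ]` fixes `a`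
and sends `u` to `c + (u - c) / Nⁿ`. Hence its conjugate of `g` sends `a` to `c + (u - c) / Nⁿ`,
and these points are pairwise distinct.
-/

open Filter

theorem NAdic.add {N : ℕ} (hN : N ≠ 0) {x y : ℝ} (hx : NAdic N x) (hy : NAdic N y) :
    NAdic N (x + y) := by
  obtain ⟨a, k, rfl⟩ := hx
  obtain ⟨b, l, rfl⟩ := hy
  refine ⟨a * N ^ l + b * N ^ k, k + l, ?_⟩
  have : (N : ℝ) ≠ 0 := by exact_mod_cast hN
  field_simp
  push_cast
  ring

theorem NAdic.div_pow {N : ℕ} {x : ℝ} (hx : NAdic N x) (j : ℕ) : NAdic N (x / (N : ℝ) ^ j) := by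
  obtain ⟨a, k, rfl⟩ := hx
  exact ⟨a, k + j, by rw [div_div, pow_add]⟩

theorem exists_nat_mul_lt_le {ε u : ℝ} (hε : 0 < ε) (hu : 0 < u) :
    ∃ m : ℕ, m * ε < u ∧ u ≤ (m + 1) * ε := by
  have hq : 0 < u / ε := div_pos hu hε
  obtain ⟨m, hm⟩ : ∃ m : ℕ, ⌈u / ε⌉₊ = m + 1 :=
    Nat.exists_eq_succ_of_ne_zero (Nat.ceil_pos.2 hq).ne'
  refine ⟨m, ?_, ?_⟩
  · have := Nat.ceil_lt_add_one hq.le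
    rw [hm, Nat.cast_succ, add_lt_add_iff_right] at this
    exact (lt_div_iff₀ hε).1 this
  · have := Nat.le_ceil (u / ε)
    rw [hm, Nat.cast_succ] at this
    exact (div_le_iff₀ hε).1 this

theorem inF'_of_eq_self_of_notMem_Ioo {N : ℕ} {f : Equiv.Perm ℝ} {a b : ℝ} (ha : 0 < a)
    (hab : a ≤ b) (hb : b < 1) (hcont : Continuous f) (hmono : StrictMono f)
    (hfix : ∀ x ∉ Ioo a b, f x = x) (s : Finset ℝ) (hs : ∀ x ∈ s, x ∈ Icc 0 1 ∧ NAdic N x)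
    (hderiv : ∀ x ∉ s, ∃ m : ℤ, HasDerivAt f ((N : ℝ) ^ m) x) : InF' N f := by
  refine ⟨⟨hcont, hmono, fun x hx => hfix x fun h => hx ⟨by linarith [h.1], by linarith [h.2]⟩,
    hfix 0 fun h => by linarith [h.1], hfix 1 fun h => by linarith [h.2], s, hs,
    fun x _ => hderiv x⟩, a, b, ha, by linarith, by linarith, hb,
    fun x hx => hfix x fun h => by linarith [hx.2, h.1],
    fun x hx => hfix x fun h => by linarith [hx.1, h.2]⟩

/-- For `1 ≤ P`: the identity outside `[c, c + ε + ε / P]`, with slope `P⁻¹` on `[c, c + ε]` and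
slope `P` after it.  Written with `min`/`max` so that continuity and monotonicity are immediate. -/
def bump (c ε P x : ℝ) : ℝ :=
  min x (max (c + (x - c) / P) (c + ε / P + P * (x - c - ε)))

section bump

variable {c ε P x : ℝ}

theorem bump_continuous : Continuous (bump c ε P) := by
  unfold bump; fun_prop

theorem bump_strictMono (hP : 0 < P) : StrictMono (bump c ε P) := fun x y hxy =>
  min_lt_min hxy (max_lt_max (by gcongr) (by gcongr))

theorem bump_of_le (hP : 1 ≤ P) (hx : x ≤ c) : bump c ε P x = x := by
  refine min_eq_left (le_max_of_le_left ?_)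
  have : x - c ≤ (x - c) / P := by
    rw [le_div_iff₀ (by linarith)]; nlinarith
  linarith

theorem bump_of_ge (hP : 1 ≤ P) (hx : c + ε + ε / P ≤ x) : bump c ε P x = x := by
  refine min_eq_left (le_max_of_le_right ?_)
  have : P * (ε / P) = ε := mul_div_cancel₀ ε (by positivity)
  nlinarith

theorem bump_of_mem_Icc_left (hP : 1 ≤ P) (hx : x ∈ Icc c (c + ε)) :
    bump c ε P x = c + (x - c) / P := by
  have hP0 : 0 < P := by linarith
  rw [bump, max_eq_left, min_eq_right]
  · linarith [div_le_self (sub_nonneg.2 hx.1) hP]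
  · have : P * (x - c - ε) ≤ (x - c - ε) / P := by
      rw [le_div_iff₀ hP0]
      nlinarith [mul_nonneg (sub_nonneg.2 hx.2) (by nlinarith : (0 : ℝ) ≤ P * P - 1)]
    have : (x - c) / P = ε / P + (x - c - ε) / P := by ring
    linarith

theorem bump_of_mem_Icc_right (hP : 1 ≤ P) (hx : x ∈ Icc (c + ε) (c + ε + ε / P)) :
    bump c ε P x = c + ε / P + P * (x - c - ε) := by
  have hP0 : 0 < P := by linarith
  have : P * (ε / P) = ε := mul_div_cancel₀ ε hP0.ne'
  rw [bump, max_eq_right, min_eq_right]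
  · nlinarith [hx.1, hx.2]
  · have : (x - c - ε) / P ≤ P * (x - c - ε) := by
      rw [div_le_iff₀ hP0]
      nlinarith [mul_nonneg (sub_nonneg.2 hx.1) (by nlinarith : (0 : ℝ) ≤ P * P - 1)]
    have : (x - c) / P = ε / P + (x - c - ε) / P := by ring
    linarith

theorem bump_hasDerivAt (hP : 1 ≤ P) (hx : x ∉ ({c, c + ε, c + ε + ε / P} : Set ℝ)) :
    HasDerivAt (bump c ε P) 1 x ∨ HasDerivAt (bump c ε P) P⁻¹ x ∨
      HasDerivAt (bump c ε P) P x := by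
  simp only [mem_insert_iff, mem_singleton_iff, not_or] at hx
  obtain ⟨hc, hcε, hd⟩ := hx
  rcases lt_or_gt_of_ne hc with hc | hc
  · refine Or.inl <| (hasDerivAt_id x).congr_of_eventuallyEq <|
      eventuallyEq_of_mem (Iio_mem_nhds hc) fun y hy => bump_of_le hP (le_of_lt hy)
  rcases lt_or_gt_of_ne hcε with hcε | hcε
  · refine Or.inr <| Or.inl ?_
    have := (((hasDerivAt_id x).sub_const c).div_const P).const_add c
    rw [one_div] at this
    exact this.congr_of_eventuallyEq <| eventuallyEq_of_mem (Ioo_mem_nhds hc hcε)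
      fun y hy => bump_of_mem_Icc_left hP (Ioo_subset_Icc_self hy)
  rcases lt_or_gt_of_ne hd with hd | hd
  · refine Or.inr <| Or.inr ?_
    have := ((((hasDerivAt_id x).sub_const c).sub_const ε).const_mul P).const_add (c + ε / P)
    rw [mul_one] at this
    exact this.congr_of_eventuallyEq <| eventuallyEq_of_mem (Ioo_mem_nhds hcε hd)
      fun y hy => bump_of_mem_Icc_right hP (Ioo_subset_Icc_self hy)
  · exact Or.inl <| (hasDerivAt_id x).congr_of_eventuallyEq <|
      eventuallyEq_of_mem (Ioi_mem_nhds hd) fun y hy => bump_of_ge hP (le_of_lt hy)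

theorem bump_surjective (hP : 1 ≤ P) : Function.Surjective (bump c ε P) :=
  bump_continuous.surjective
    (tendsto_id.congr' <| (eventually_ge_atTop _).mono fun _ hx => (bump_of_ge hP hx).symm)
    (tendsto_id.congr' <| (eventually_le_atBot _).mono fun _ hx => (bump_of_le hP hx).symm)

end bump

def bumpPerm (c ε P : ℝ) (hP : 1 ≤ P) : Equiv.Perm ℝ :=
  (StrictMono.orderIsoOfSurjective (bump c ε P) (bump_strictMono (by linarith))
    (bump_surjective hP)).toEquiv

@[simp]
theorem coe_bumpPerm (c ε P : ℝ) (hP : 1 ≤ P) : ⇑(bumpPerm c ε P hP) = bump c ε P := rfl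

theorem bumpPerm_inF' {N : ℕ} (hN : 1 ≤ N) {c ε : ℝ} (hc : NAdic N c) (hε : NAdic N ε)
    (hc0 : 0 < c) (hε0 : 0 < ε) (p : ℕ) (hd : c + ε + ε / (N : ℝ) ^ p < 1) :
    InF' N (bumpPerm c ε ((N : ℝ) ^ p) (one_le_pow₀ (by exact_mod_cast hN))) := by
  have hP : (1 : ℝ) ≤ (N : ℝ) ^ p := one_le_pow₀ (by exact_mod_cast hN)
  have hεP : 0 < ε / (N : ℝ) ^ p := by positivity
  refine inF'_of_eq_self_of_notMem_Ioo hc0 (by linarith) hd bump_continuous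
    (bump_strictMono (by linarith)) (fun x hx => ?_) {c, c + ε, c + ε + ε / (N : ℝ) ^ p}
    (fun x hx => ?_) (fun x hx => ?_)
  · rw [mem_Ioo, not_and_or, not_lt, not_lt] at hx
    rcases hx with hx | hx
    exacts [bump_of_le hP hx, bump_of_ge hP hx]
  · have hcε : NAdic N (c + ε) := hc.add (by omega) hε
    simp only [Finset.mem_insert, Finset.mem_singleton] at hx
    rcases hx with rfl | rfl | rfl
    exacts [⟨⟨hc0.le, by linarith⟩, hc⟩, ⟨⟨by linarith, by linarith⟩, hcε⟩,
      ⟨⟨by linarith, hd.le⟩, hcε.add (by omega) (hε.div_pow p)⟩]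
  · have hx' : x ∉ ({c, c + ε, c + ε + ε / (N : ℝ) ^ p} : Set ℝ) := by simpa using hx
    rcases bump_hasDerivAt hP hx' with h | h | h
    · exact ⟨0, by simpa using h⟩
    · exact ⟨-p, by simpa using h⟩
    · exact ⟨p, by simpa using h⟩

def conjClassF' (N : ℕ) (g : Equiv.Perm ℝ) : Set (Equiv.Perm ℝ) :=
  {k | ∃ h : Equiv.Perm ℝ, InF' N h ∧ k = h * g * h⁻¹}

theorem conjClassF'_inv (N : ℕ) (g : Equiv.Perm ℝ) :
    conjClassF' N g⁻¹ = (conjClassF' N g)⁻¹ := by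
  ext k
  simp only [conjClassF', Set.mem_inv, mem_ofPred_eq, inv_eq_iff_eq_inv (a := k), mul_inv_rev,
    inv_inv, mul_assoc]

theorem conjClassF'_infinite_of_lt {N : ℕ} (hN : 1 < N) {g : Equiv.Perm ℝ} {a : ℝ} (ha : 0 ≤ a)
    (hlt : a < g a) (hlt1 : g a < 1) : (conjClassF' N g).Infinite := by
  set u := g a
  have hN1 : (1 : ℝ) < N := by exact_mod_cast hN
  obtain ⟨K, hK⟩ := exists_pow_lt_of_lt_one (lt_min (sub_pos.2 hlt) (by linarith : 0 < (1 - u) / 2))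
    (inv_lt_one_of_one_lt₀ hN1)
  set ε : ℝ := 1 / (N : ℝ) ^ K
  rw [inv_pow, ← one_div, lt_min_iff] at hK
  have hε0 : 0 < ε := by positivity
  obtain ⟨m, hmu, hum⟩ := exists_nat_mul_lt_le hε0 (ha.trans_lt hlt)
  set c := m * ε
  have hac : a < c := by linarith
  have hd (p : ℕ) : c + ε + ε / (N : ℝ) ^ p < 1 := by
    linarith [div_le_self hε0.le (one_le_pow₀ hN1.le : (1 : ℝ) ≤ (N : ℝ) ^ p)]
  have hc : NAdic N c := ⟨m, K, mul_one_div _ _⟩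
  have hε : NAdic N ε := ⟨1, K, by rw [Nat.cast_one]⟩
  have hP (n : ℕ) : (1 : ℝ) ≤ (N : ℝ) ^ n := one_le_pow₀ hN1.le
  set h : ℕ → Equiv.Perm ℝ := fun n => bumpPerm c ε ((N : ℝ) ^ n) (hP n)
  have hval (n : ℕ) : (h n * g * (h n)⁻¹) a = c + (u - c) / (N : ℝ) ^ n := by
    have hfix : (h n)⁻¹ a = a := Equiv.Perm.inv_eq_iff_eq.2 (bump_of_le (hP n) hac.le).symm
    rw [Equiv.Perm.mul_apply, Equiv.Perm.mul_apply, hfix, coe_bumpPerm,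
      bump_of_mem_Icc_left (hP n) ⟨hmu.le, by linarith⟩]
  have hanti : StrictAnti fun n : ℕ => c + (u - c) / (N : ℝ) ^ n := fun n₁ n₂ hn =>
    (add_lt_add_iff_left c).2 <|
      div_lt_div_of_pos_left (sub_pos.2 hmu) (by positivity) (pow_lt_pow_right₀ hN1 hn)
  refine Set.infinite_of_injective_forall_mem (f := fun n => h n * g * (h n)⁻¹)
    (fun n₁ n₂ he => hanti.injective ?_) fun n => ⟨h n, bumpPerm_inF' (by omega) hc hε
      (ha.trans_lt hac) hε0 n (hd n), rfl⟩
  simp only [← hval]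
  exact congrArg (· a) he

theorem InFN.exists_mem_Ioo_apply_ne {N : ℕ} {g : Equiv.Perm ℝ} (hg : InFN N g) (hne : g ≠ 1) :
    ∃ a ∈ Ioo (0 : ℝ) 1, g a ≠ a := by
  obtain ⟨-, -, hout, h0, h1, -⟩ := hg
  by_contra! hfix
  refine hne (Equiv.ext fun x => ?_)
  by_cases hx : x ∈ Icc (0 : ℝ) 1
  · rcases eq_endpoints_or_mem_Ioo_of_mem_Icc hx with rfl | rfl | hx
    exacts [h0, h1, hfix x hx]
  · exact hout x hx

theorem InFN.apply_mem_Ioo {N : ℕ} {g : Equiv.Perm ℝ} (hg : InFN N g) {a : ℝ}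
    (ha : a ∈ Ioo (0 : ℝ) 1) : g a ∈ Ioo (0 : ℝ) 1 := by
  obtain ⟨-, hmono, -, h0, h1, -⟩ := hg
  exact ⟨h0 ▸ hmono ha.1, h1 ▸ hmono ha.2⟩

/-- `F'` is i.c.c.: every nontrivial `g ∈ F'` has an infinite conjugacy class
in `F'`. -/
theorem stmt7 (N : ℕ) (hN : 2 ≤ N) (g : Equiv.Perm ℝ) (hg : InF' N g) (hne : g ≠ 1) :
    {k : Equiv.Perm ℝ | ∃ h : Equiv.Perm ℝ, InF' N h ∧ k = h * g * h⁻¹}.Infinite := by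
  obtain ⟨a, ha, hga⟩ := hg.1.exists_mem_Ioo_apply_ne hne
  have hga' := hg.1.apply_mem_Ioo ha
  change (conjClassF' N g).Infinite
  rcases lt_or_gt_of_ne hga with hlt | hgt
  · rw [← Set.infinite_inv, ← conjClassF'_inv]
    exact conjClassF'_infinite_of_lt hN hga'.1.le (by simpa using hlt) (by simpa using ha.2)
  · exact conjClassF'_infinite_of_lt hN ha.1.le hgt hga'.2
end
end

section
/- The generalized Thompson group F(N) is an i.c.c. group: every element other than the identity has an infinite conjugacy class. -/
open Set Filter

set_option maxHeartbeats 1000000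
noncomputable section

lemma nadic_between {N : ℕ} (hN : 2 ≤ N) {p q : ℝ} (hp : 0 ≤ p) (hpq : p < q) :
    ∃ b : ℝ, NAdic N b ∧ p < b ∧ b < q := by
  have hn1 : (1:ℝ) < N := by exact_mod_cast (by omega : 1 < N)
  obtain ⟨k, hk⟩ := pow_unbounded_of_one_lt (1 / (q - p)) hn1
  have hpowpos : (0:ℝ) < (N:ℝ) ^ k := by positivity
  refine ⟨((⌊p * (N:ℝ) ^ k⌋₊ + 1 : ℕ) : ℝ) / (N:ℝ) ^ k, ⟨_, k, rfl⟩, ?_, ?_⟩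
  · rw [lt_div_iff₀ hpowpos]
    push_cast
    exact Nat.lt_floor_add_one _
  · rw [div_lt_iff₀ hpowpos]
    push_cast
    have h1 : (⌊p * (N:ℝ) ^ k⌋₊ : ℝ) ≤ p * (N:ℝ) ^ k := Nat.floor_le (by positivity)
    have h3 : 1 < (N:ℝ) ^ k * (q - p) := (div_lt_iff₀ (by linarith)).mp hk
    nlinarith

lemma icc_key (N : ℕ) (hN : 2 ≤ N) (l r : ℝ) (hl : 0 ≤ l) (hr : r ≤ 1) (hlr : l < r)
    (hla : NAdic N l) (hra : NAdic N r) (K : ℕ) :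
    ∃ h : Equiv.Perm ℝ, InFN N h ∧ (∀ x, x ≤ l → h x = x) ∧ (∀ x, r ≤ x → h x = x) ∧
      (∀ x, l + (r - l) / (N:ℝ) ^ (K+2) ≤ x → x ≤ r - N * ((r - l) / (N:ℝ) ^ (K+2)) →
        h x = x + ((r - l) / (N:ℝ) ^ (K+2)) * ((N:ℝ) - 1)) := by
  have hn2 : (2:ℝ) ≤ (N:ℝ) := by exact_mod_cast hN
  have hn0 : (0:ℝ) < (N:ℝ) := by linarith
  set n : ℝ := (N:ℝ) with hnn
  have hpow : (0:ℝ) < n ^ (K+2) := by positivity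
  set d : ℝ := (r - l) / n ^ (K+2) with hdd
  have hd0 : 0 < d := div_pos (by linarith) hpow
  have hd1 : d * (n + 1) ≤ r - l := by
    rw [hdd, div_mul_eq_mul_div, div_le_iff₀ hpow]
    have h1 : n ^ 2 ≤ n ^ (K+2) := pow_le_pow_right₀ (by linarith) (by omega)
    have h2 : n + 1 ≤ n ^ 2 := by nlinarith
    have hrl : (0:ℝ) ≤ r - l := by linarith
    exact le_trans (mul_le_mul_of_nonneg_left h2 hrl) (mul_le_mul_of_nonneg_left h1 hrl)
  have hdn : l + d ≤ r - n * d := by nlinarith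
  set f : ℝ → ℝ := fun x => max x (min (l + n * (x - l)) (min (x + d * (n - 1)) (r + (x - r) / n))) with hf
  -- pointwise values
  have hle : ∀ x, x ≤ l → f x = x := by
    intro x hx
    have h1 : l + n * (x - l) ≤ x := by nlinarith
    exact max_eq_left ((min_le_left _ _).trans h1)
  have hge : ∀ x, r ≤ x → f x = x := by
    intro x hx
    have h1 : (x - r) / n ≤ x - r := by
      rw [div_le_iff₀ hn0]; nlinarith
    have h2 : r + (x - r) / n ≤ x := by linarith
    exact max_eq_left ((min_le_right _ _).trans ((min_le_right _ _).trans h2))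
  have hp1 : ∀ x, l ≤ x → x ≤ l + d → f x = l + n * (x - l) := by
    intro x ha hb
    have e12 : l + n * (x - l) ≤ x + d * (n - 1) := by nlinarith
    have e13 : l + n * (x - l) ≤ r + (x - r) / n := by
      have h3 : (l + n * (x - l) - r) * n ≤ x - r := by nlinarith
      have h4 : l + n * (x - l) - r ≤ (x - r) / n := (le_div_iff₀ hn0).mpr h3
      linarith
    have ex : x ≤ l + n * (x - l) := by nlinarith
    rw [hf]
    simp only
    rw [min_eq_left (le_min e12 e13), max_eq_right ex]
  have hmid : ∀ x, l + d ≤ x → x ≤ r - n * d → f x = x + d * (n - 1) := by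
    intro x ha hb
    have e1 : x + d * (n - 1) ≤ l + n * (x - l) := by nlinarith
    have e2 : x + d * (n - 1) ≤ r + (x - r) / n := by
      have h3 : (x + d * (n - 1) - r) * n ≤ x - r := by nlinarith
      have h4 : x + d * (n - 1) - r ≤ (x - r) / n := (le_div_iff₀ hn0).mpr h3
      linarith
    have ex : x ≤ x + d * (n - 1) := by nlinarith
    rw [hf]
    simp only
    rw [min_eq_left e2, min_eq_right e1, max_eq_right ex]
  have hp3 : ∀ x, r - n * d ≤ x → x ≤ r → f x = r + (x - r) / n := by
    intro x ha hb
    have e32 : r + (x - r) / n ≤ x + d * (n - 1) := by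
      have h3 : x - r ≤ (x + d * (n - 1) - r) * n := by nlinarith
      have h4 : (x - r) / n ≤ x + d * (n - 1) - r := (div_le_iff₀ hn0).mpr h3
      linarith
    have e31 : r + (x - r) / n ≤ l + n * (x - l) := by
      have h3 : x - r ≤ (l + n * (x - l) - r) * n := by
        nlinarith [mul_nonneg (mul_nonneg hn0.le (by linarith : (0:ℝ) ≤ n - 1))
          (by linarith : (0:ℝ) ≤ r - l - (n+1) * d),
          mul_nonneg (by nlinarith : (0:ℝ) ≤ n * n - 1)
          (by linarith : (0:ℝ) ≤ x - (r - n * d))]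
      have h4 : (x - r) / n ≤ l + n * (x - l) - r := (div_le_iff₀ hn0).mpr h3
      linarith
    have ex : x ≤ r + (x - r) / n := by
      have h3 : (x - r) * n ≤ x - r := by nlinarith
      have h4 : x - r ≤ (x - r) / n := (le_div_iff₀ hn0).mpr h3
      linarith
    rw [hf]
    simp only
    rw [min_eq_right e32, min_eq_right e31, max_eq_right ex]
  -- continuity, strict monotonicity, surjectivity
  have hcont : Continuous f := by
    rw [hf]; fun_prop
  have hsm : StrictMono f := by
    intro a b hab
    rw [hf]
    simp only
    refine max_lt_max hab (min_lt_min (by nlinarith) (min_lt_min (by linarith) (by gcongr)))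
  have htop : Tendsto f atTop atTop := by
    refine Tendsto.congr' ?_ tendsto_id
    filter_upwards [eventually_ge_atTop r] with x hx
    exact (hge x hx).symm
  have hbot : Tendsto f atBot atBot := by
    refine Tendsto.congr' ?_ tendsto_id
    filter_upwards [eventually_le_atBot l] with x hx
    exact (hle x hx).symm
  have hsurj : Function.Surjective f := hcont.surjective htop hbot
  set hp : Equiv.Perm ℝ := Equiv.ofBijective f ⟨hsm.injective, hsurj⟩ with hhp
  have hcoe : ⇑hp = f := rfl
  -- N-adic breakpoints
  obtain ⟨al, kl, hal⟩ := hla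
  obtain ⟨ar, kr, har⟩ := hra
  have hNne : (N:ℝ) ≠ 0 := by positivity
  have hone : (1:ℕ) ≤ N ^ (K+2) := Nat.one_le_pow _ _ (by omega)
  have hone' : (1:ℕ) ≤ N ^ (K+1) := Nat.one_le_pow _ _ (by omega)
  have adic1 : NAdic N (l + d) := by
    refine ⟨al * N ^ kr * (N ^ (K+2) - 1) + ar * N ^ kl, kl + kr + (K+2), ?_⟩
    rw [hdd, hal, har, hnn]
    rw [Nat.cast_add, Nat.cast_mul, Nat.cast_mul, Nat.cast_mul, Nat.cast_sub hone]
    push_cast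
    field_simp
    ring
  have adic2 : NAdic N (r - n * d) := by
    refine ⟨ar * N ^ kl * (N ^ (K+1) - 1) + al * N ^ kr, kl + kr + (K+1), ?_⟩
    rw [hdd, hal, har, hnn]
    rw [Nat.cast_add, Nat.cast_mul, Nat.cast_mul, Nat.cast_mul, Nat.cast_sub hone']
    push_cast
    field_simp
    ring
  have hd_le : d ≤ r - l := by nlinarith
  have hIcc1 : l + d ∈ Icc (0:ℝ) 1 := ⟨by linarith, by linarith⟩
  have hIcc2 : r - n * d ∈ Icc (0:ℝ) 1 := ⟨by nlinarith, by nlinarith⟩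
  refine ⟨hp, ⟨?_, ?_, ?_, ?_, ?_, ?_⟩, fun x hx => hle x hx, fun x hx => hge x hx,
    fun x h1 h2 => hmid x h1 h2⟩
  · exact hcont
  · exact hsm
  · intro x hx
    simp only [mem_Icc, not_and_or, not_le] at hx
    rcases hx with hx | hx
    · exact hle x (by linarith)
    · exact hge x (by linarith)
  · exact hle 0 hl
  · exact hge 1 hr
  · refine ⟨{l, l + d, r - n * d, r}, ?_, ?_⟩
    · intro x hx
      simp only [Finset.mem_insert, Finset.mem_singleton] at hx
      rcases hx with rfl | rfl | rfl | rfl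
      · exact ⟨⟨hl, by linarith⟩, al, kl, hal⟩
      · exact ⟨hIcc1, adic1⟩
      · exact ⟨hIcc2, adic2⟩
      · exact ⟨⟨by linarith, hr⟩, ar, kr, har⟩
    · intro x hx hxs
      simp only [Finset.mem_insert, Finset.mem_singleton, not_or] at hxs
      obtain ⟨hs1, hs2, hs3, hs4⟩ := hxs
      rcases lt_trichotomy x l with h | h | h
      · refine ⟨0, ?_⟩
        have hder : HasDerivAt f 1 x := (hasDerivAt_id x).congr_of_eventuallyEq
          (eventuallyEq_of_mem (Iio_mem_nhds h) (fun y hy => hle y (le_of_lt hy)))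
        rw [hcoe]
        simpa using hder
      · exact absurd h hs1
      · rcases lt_trichotomy x (l + d) with h2 | h2 | h2
        · refine ⟨1, ?_⟩
          have hline : HasDerivAt (fun y : ℝ => l + n * (y - l)) n x := by
            simpa using (((hasDerivAt_id x).sub_const l).const_mul n).const_add l
          have hder : HasDerivAt f n x := hline.congr_of_eventuallyEq
            (eventuallyEq_of_mem (Ioo_mem_nhds h h2)
              (fun y hy => hp1 y hy.1.le hy.2.le))
          rw [hcoe]
          simpa using hder
        · exact absurd h2 hs2
        · rcases lt_trichotomy x (r - n * d) with h3 | h3 | h3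
          · refine ⟨0, ?_⟩
            have hline : HasDerivAt (fun y : ℝ => y + d * (n - 1)) 1 x :=
              (hasDerivAt_id x).add_const _
            have hder : HasDerivAt f 1 x := hline.congr_of_eventuallyEq
              (eventuallyEq_of_mem (Ioo_mem_nhds h2 h3)
                (fun y hy => hmid y hy.1.le hy.2.le))
            rw [hcoe]
            simpa using hder
          · exact absurd h3 hs3
          · rcases lt_trichotomy x r with h4 | h4 | h4
            · refine ⟨-1, ?_⟩
              have hline : HasDerivAt (fun y : ℝ => r + (y - r) / n) (1 / n) x := by
                simpa using (((hasDerivAt_id x).sub_const r).div_const n).const_add r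
              have hder : HasDerivAt f (1 / n) x := hline.congr_of_eventuallyEq
                (eventuallyEq_of_mem (Ioo_mem_nhds h3 h4)
                  (fun y hy => hp3 y hy.1.le hy.2.le))
              rw [hcoe]
              have heq : ((N : ℝ)) ^ (-1 : ℤ) = 1 / n := by
                rw [zpow_neg, zpow_one, one_div, hnn]
              rw [heq]
              exact hder
            · exact absurd h4 hs4
            · refine ⟨0, ?_⟩
              have hder : HasDerivAt f 1 x := (hasDerivAt_id x).congr_of_eventuallyEq
                (eventuallyEq_of_mem (Ioi_mem_nhds h4) (fun y hy => hge y (le_of_lt hy)))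
              rw [hcoe]
              simpa using hder

lemma icc_pick (N : ℕ) (hN : 2 ≤ N) {v p q : ℝ} (hp : 0 ≤ p) (hpv : p < v) (hvq : v < q) :
    ∃ l r : ℝ, NAdic N l ∧ NAdic N r ∧ p < l ∧ r < q ∧ l < r ∧
      l + (r - l) / (N:ℝ) ^ 2 ≤ v ∧ v ≤ r - (r - l) / (N:ℝ) := by
  have hn2 : (2:ℝ) ≤ (N:ℝ) := by exact_mod_cast hN
  set δ : ℝ := min (v - p) (q - v) with hδdef
  have hδ0 : 0 < δ := lt_min (by linarith) (by linarith)
  have hδ1 : δ ≤ v - p := min_le_left _ _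
  have hδ2 : δ ≤ q - v := min_le_right _ _
  obtain ⟨l, hla, hl1, hl2⟩ := nadic_between hN (show 0 ≤ v - δ/2 by linarith) (show v - δ/2 < v by linarith)
  have hvl : 0 < v - l := by linarith
  obtain ⟨r, hra, hr1, hr2⟩ := nadic_between hN (show 0 ≤ v + (v - l) by linarith)
    (show v + (v - l) < v + 2*(v - l) by linarith)
  refine ⟨l, r, hla, hra, by linarith, by linarith, by linarith, ?_, ?_⟩
  · have h1 : (r - l) / (N:ℝ)^2 ≤ v - l := by
      rw [div_le_iff₀ (by positivity)]
      have h4 : (4:ℝ) ≤ (N:ℝ)^2 := by nlinarith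
      nlinarith [mul_le_mul_of_nonneg_right h4 hvl.le]
    linarith
  · have h1 : (r - l) / (N:ℝ) ≤ r - v := by
      rw [div_le_iff₀ (by positivity)]
      have h4 : (0:ℝ) ≤ r - v := by linarith
      nlinarith [mul_le_mul_of_nonneg_right hn2 h4]
    linarith

lemma icc_final (N : ℕ) (hN : 2 ≤ N) (g : Equiv.Perm ℝ) (hg : InFN N g) (u : ℝ)
    (l r : ℝ) (hla : NAdic N l) (hra : NAdic N r) (hl0 : 0 ≤ l) (hr1 : r ≤ 1) (hlr : l < r)
    (hA : l + (r - l) / (N:ℝ) ^ 2 ≤ g u) (hB : g u ≤ r - (r - l) / (N:ℝ))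
    (hside : u ≤ l ∨ r ≤ u) :
    {k : Equiv.Perm ℝ | ∃ h : Equiv.Perm ℝ, InFN N h ∧ k = h * g * h⁻¹}.Infinite := by
  have hn2 : (2:ℝ) ≤ (N:ℝ) := by exact_mod_cast hN
  have hn0 : (0:ℝ) < (N:ℝ) := by linarith
  have hrl : (0:ℝ) < r - l := by linarith
  have hKEY : ∀ m : ℕ, ∃ h : Equiv.Perm ℝ, InFN N h ∧ h u = u ∧
      h (g u) = g u + ((r - l) / (N:ℝ) ^ (m+2)) * ((N:ℝ) - 1) := by
    intro m
    obtain ⟨h, hF, hfl, hfr, hm⟩ := icc_key N hN l r hl0 hr1 hlr hla hra m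
    have hmono : (r - l) / (N:ℝ) ^ (m+2) ≤ (r - l) / (N:ℝ) ^ 2 := by
      apply div_le_div_of_nonneg_left hrl.le (by positivity)
      exact pow_le_pow_right₀ (by linarith) (by omega)
    have hmono2 : (N:ℝ) * ((r - l) / (N:ℝ) ^ (m+2)) ≤ (r - l) / (N:ℝ) := by
      have he : (N:ℝ) * ((r - l) / (N:ℝ) ^ (m+2)) = (r - l) / (N:ℝ) ^ (m+1) := by
        field_simp
        ring
      rw [he]
      calc (r - l) / (N:ℝ) ^ (m+1) ≤ (r - l) / (N:ℝ) ^ 1 :=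
            div_le_div_of_nonneg_left hrl.le (by positivity)
              (pow_le_pow_right₀ (by linarith) (by omega))
        _ = (r - l) / (N:ℝ) := by rw [pow_one]
    refine ⟨h, hF, ?_, hm (g u) (by linarith) (by linarith)⟩
    rcases hside with h1 | h1
    · exact hfl u h1
    · exact hfr u h1
  choose H h1 h2 h3 using hKEY
  apply Set.infinite_of_injective_forall_mem
    (f := fun m : ℕ => H m * g * (H m)⁻¹)
  case hf => exact fun m => ⟨H m, h1 m, rfl⟩
  intro a b hab
  have hval : ∀ m : ℕ, (H m * g * (H m)⁻¹) u = g u + ((r - l) / (N:ℝ) ^ (m+2)) * ((N:ℝ) - 1) := by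
    intro m
    have hinv : (H m)⁻¹ u = u := Equiv.Perm.inv_eq_iff_eq.mpr (h2 m).symm
    rw [Equiv.Perm.mul_apply, Equiv.Perm.mul_apply, hinv]
    exact h3 m
  have he : g u + ((r - l) / (N:ℝ) ^ (a+2)) * ((N:ℝ) - 1)
      = g u + ((r - l) / (N:ℝ) ^ (b+2)) * ((N:ℝ) - 1) := by
    have hab' : H a * g * (H a)⁻¹ = H b * g * (H b)⁻¹ := hab
    rw [← hval a, ← hval b, hab']
  have hc : (r - l) / (N:ℝ) ^ (a+2) = (r - l) / (N:ℝ) ^ (b+2) := by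
    have hne : ((N:ℝ) - 1) ≠ 0 := by linarith
    exact mul_right_cancel₀ hne (add_left_cancel he)
  have hpa : (0:ℝ) < (N:ℝ) ^ (a+2) := by positivity
  have hpb : (0:ℝ) < (N:ℝ) ^ (b+2) := by positivity
  have hpoweq : ((N:ℝ)) ^ (b+2) = (N:ℝ) ^ (a+2) := by
    have := (div_eq_div_iff hpa.ne' hpb.ne').mp hc
    exact mul_left_cancel₀ hrl.ne' this
  have hnat : N ^ (b+2) = N ^ (a+2) := by exact_mod_cast hpoweq
  have := Nat.pow_right_injective hN hnat
  omega


/-- `F(N)` is i.c.c.: every nontrivial element has an infinite conjugacy class. -/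
theorem stmt8 (N : ℕ) (hN : 2 ≤ N) (g : Equiv.Perm ℝ) (hg : InFN N g) (hne : g ≠ 1) :
    {k : Equiv.Perm ℝ | ∃ h : Equiv.Perm ℝ, InFN N h ∧ k = h * g * h⁻¹}.Infinite := by
  obtain ⟨hgc, hgsm, hgfix, hg0, hg1, -⟩ := id hg
  have hune : ∃ u : ℝ, g u ≠ u := by
    by_contra h
    push_neg at h
    exact hne (Equiv.ext fun x => by simp [h x])
  obtain ⟨u, hu⟩ := hune
  have hu01 : u ∈ Icc (0:ℝ) 1 := by
    by_contra h
    exact hu (hgfix u h)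
  have hu0 : 0 < u := by
    rcases eq_or_lt_of_le hu01.1 with h | h
    · exact absurd (by rw [← h, hg0]) hu
    · exact h
  have hu1 : u < 1 := by
    rcases eq_or_lt_of_le hu01.2 with h | h
    · exact absurd (by rw [h, hg1]) hu
    · exact h
  have hv0 : 0 < g u := by
    calc (0:ℝ) = g 0 := hg0.symm
      _ < g u := hgsm hu0
  have hv1 : g u < 1 := by
    calc g u < g 1 := hgsm hu1
      _ = 1 := hg1
  rcases lt_or_gt_of_ne hu with hlt | hgt
  · -- g u < u : choose support interval inside (0, u)
    obtain ⟨l, r, hla, hra, hpl, hrq, hlr, hA, hB⟩ := icc_pick N hN le_rfl hv0 hlt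
    exact icc_final N hN g hg u l r hla hra hpl.le (hrq.le.trans hu01.2) hlr hA hB
      (Or.inr hrq.le)
  · -- u < g u : choose support interval inside (u, 1)
    obtain ⟨l, r, hla, hra, hpl, hrq, hlr, hA, hB⟩ := icc_pick N hN hu01.1 hgt hv1
    exact icc_final N hN g hg u l r hla hra (hu0.trans hpl).le hrq.le hlr hA hB
      (Or.inl hpl.le)
end
end
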